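/- Let n ≥ 2 and c be positive integers, and let A ⊆ {0,1}^n with |A| ≥ 2^{n−c}. Then for every integer k with 1 ≤ k ≤ c, ∑_{v ∈ {0,1}^{n−1}, |v| = k} f̃(1·v)² ≤ (4c/k)^k, where 1·v ∈ {0,1}^n denotes the string whose first coordinate is 1 followed by v. -/

import Mathlib

open scoped Classical

noncomputable section

/-- The sign `(-1)^{z·x}` where `z·x = ∑ i, z i * x i` over `{0,1}^n`. -/
def chi {n : ℕ} (z x : Fin n → Bool) : ℝ :=
  (-1 : ℝ) ^ (Finset.univ.filter (fun i => z i = true ∧ x i = true)).card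

/-- Hamming weight of `z ∈ {0,1}^n`. -/
def hw {n : ℕ} (z : Fin n → Bool) : ℕ :=
  (Finset.univ.filter (fun i => z i = true)).card

/-- Normalized Fourier coefficient of (the indicator of) `A ⊆ {0,1}^n`:
`f̃(z) = (1/|A|) ∑_{x ∈ A} (-1)^{z·x}`. -/
def ftilde {n : ℕ} (A : Finset (Fin n → Bool)) (z : Fin n → Bool) : ℝ :=
  (1 / A.card) * ∑ x ∈ A, chi z x

lemma chi_eq_prod {n : ℕ} (z x : Fin n → Bool) :
    chi z x = ∏ i, (if z i = true ∧ x i = true then (-1 : ℝ) else 1) := by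
  rw [chi, Finset.prod_ite, Finset.prod_const, Finset.prod_const, one_pow, mul_one]

lemma chi_cons {m : ℕ} (zb : Bool) (z : Fin m → Bool) (x : Fin (m+1) → Bool) :
    chi (Fin.cons zb z) x
      = (if zb = true ∧ x 0 = true then (-1:ℝ) else 1) * chi z (Fin.tail x) := by
  rw [chi_eq_prod, chi_eq_prod, Fin.prod_univ_succ]
  simp [Fin.tail]
  split_ifs <;> rfl

lemma hw_cons {m : ℕ} (zb : Bool) (z : Fin m → Bool) :
    hw (Fin.cons zb z) = (if zb = true then 1 else 0) + hw z := by
  rw [hw, hw, Finset.card_filter, Finset.card_filter, Fin.sum_univ_succ]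
  simp

lemma sum_cube_succ {m : ℕ} (F : (Fin (m+1) → Bool) → ℝ) :
    ∑ x : Fin (m+1) → Bool, F x
      = ∑ y : Fin m → Bool, (F (Fin.cons false y) + F (Fin.cons true y)) := by
  rw [← Fintype.sum_equiv (Fin.consEquiv (fun _ => Bool))
      (fun p : Bool × (Fin m → Bool) => F (Fin.cons p.1 p.2)) F (fun p => rfl)]
  rw [Fintype.sum_prod_type_right]
  simp [Fintype.sum_bool, add_comm]

lemma choose_ineq (t : ℕ) : ∀ j, j ≤ t → Nat.choose (2*t) (2*j) ≤ Nat.choose t j * (2*t-1)^j := by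
  intro j
  induction j with
  | zero => simp
  | succ j ih =>
    intro hj1
    have IH := ih (Nat.le_of_succ_le hj1)
    have e1 : Nat.choose (2*t) (2*j+1) * (2*j+1) = Nat.choose (2*t) (2*j) * (2*t - 2*j) :=
      Nat.choose_succ_right_eq (2*t) (2*j)
    have e2 : Nat.choose (2*t) (2*j+2) * (2*j+2) = Nat.choose (2*t) (2*j+1) * (2*t - (2*j+1)) :=
      Nat.choose_succ_right_eq (2*t) (2*j+1)
    have e3 : Nat.choose t (j+1) * (j+1) = Nat.choose t j * (t - j) :=
      Nat.choose_succ_right_eq t j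
    apply Nat.le_of_mul_le_mul_right _ (show 0 < (2*j+1)*(2*j+2) by positivity)
    have h2e : 2*(j+1) = 2*j+2 := by omega
    calc Nat.choose (2*t) (2*(j+1)) * ((2*j+1)*(2*j+2))
        = (Nat.choose (2*t) (2*j+2) * (2*j+2)) * (2*j+1) := by rw [h2e]; ring
      _ = Nat.choose (2*t) (2*j+1) * (2*t - (2*j+1)) * (2*j+1) := by rw [e2]
      _ = (Nat.choose (2*t) (2*j+1) * (2*j+1)) * (2*t - (2*j+1)) := by ring
      _ = Nat.choose (2*t) (2*j) * (2*t - 2*j) * (2*t - (2*j+1)) := by rw [e1]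
      _ ≤ (Nat.choose t j * (2*t-1)^j) * (2*t - 2*j) * (2*t - 1) :=
          Nat.mul_le_mul (Nat.mul_le_mul IH (le_refl _)) (by omega)
      _ = (Nat.choose t j * (t - j)) * (2 * ((2*t-1)^j * (2*t-1))) := by
          have h3 : 2*t - 2*j = 2*(t - j) := by omega
          rw [h3]; ring
      _ = (Nat.choose t (j+1) * (j+1)) * (2 * (2*t-1)^(j+1)) := by rw [e3, pow_succ]
      _ = (Nat.choose t (j+1) * (2*t-1)^(j+1)) * (2*(j+1)) := by ring
      _ ≤ (Nat.choose t (j+1) * (2*t-1)^(j+1)) * ((2*j+1)*(2*j+2)) := by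
          apply Nat.mul_le_mul_left
          have : 1*(2*j+2) ≤ (2*j+1)*(2*j+2) := Nat.mul_le_mul (by omega) (le_refl _)
          omega

lemma range_map_even (t : ℕ) :
    (Finset.range (t+1)).map ⟨fun j => 2*j, mul_right_injective₀ (by norm_num : (2:ℕ) ≠ 0)⟩
      = (Finset.range (2*t+1)).filter (fun k => Even k) := by
  ext a
  simp only [Finset.mem_map, Finset.mem_range, Finset.mem_filter, Function.Embedding.coeFn_mk]
  constructor
  · rintro ⟨j, hj, rfl⟩; exact ⟨by omega, ⟨j, by omega⟩⟩
  · rintro ⟨ha, ⟨r, hr⟩⟩; exact ⟨r, by omega, by omega⟩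

lemma even_binom (a b : ℝ) (t : ℕ) :
    (a + b)^(2*t) + (a - b)^(2*t)
      = 2 * ∑ j ∈ Finset.range (t+1),
          (Nat.choose (2*t) (2*j) : ℝ) * a^(2*j) * b^(2*t - 2*j) := by
  rw [sub_eq_add_neg, add_pow, add_pow, ← Finset.sum_add_distrib]
  have key : ∀ k ∈ Finset.range (2*t+1),
      (a^k * b^(2*t-k) * (Nat.choose (2*t) k : ℝ)
        + a^k * (-b)^(2*t-k) * (Nat.choose (2*t) k : ℝ))
      = if Even k then 2 * ((Nat.choose (2*t) k : ℝ) * a^k * b^(2*t-k)) else 0 := by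
    intro k hk
    simp only [Finset.mem_range] at hk
    rcases Nat.even_or_odd k with he | ho
    · have : Even (2*t - k) := by
        rcases he with ⟨r, hr⟩; exact ⟨t - r, by omega⟩
      rw [if_pos he, this.neg_pow]; ring
    · have : Odd (2*t - k) := by
        rcases ho with ⟨r, hr⟩; exact ⟨t - r - 1, by omega⟩
      rw [if_neg (by simpa using ho), this.neg_pow]; ring
  rw [Finset.sum_congr rfl key, Finset.sum_ite, Finset.sum_const_zero, add_zero,
    ← range_map_even, Finset.sum_map, Finset.mul_sum]
  simp

lemma holder_pow {ι : Type*} (s : Finset ι) (F G : ι → ℝ)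
    (hF : ∀ i ∈ s, 0 ≤ F i) (hG : ∀ i ∈ s, 0 ≤ G i) (t j : ℕ) (ht : 0 < t) (hj : j ≤ t) :
    (∑ i ∈ s, F i ^ j * G i ^ (t - j)) ^ t
      ≤ (∑ i ∈ s, F i ^ t) ^ j * (∑ i ∈ s, G i ^ t) ^ (t - j) := by
  rcases Nat.eq_zero_or_pos j with rfl | hj0
  · simp
  rcases eq_or_lt_of_le hj with rfl | hjt
  · simp
  have htj0 : 0 < t - j := by omega
  set p : ℝ := (t : ℝ) / j with hp
  set q : ℝ := (t : ℝ) / ((t : ℝ) - j) with hq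
  have hjR : (0:ℝ) < j := by exact_mod_cast hj0
  have htR : (0:ℝ) < t := by exact_mod_cast ht
  have htjR : (0:ℝ) < (t:ℝ) - j := by
    have : (j:ℝ) < t := by exact_mod_cast hjt
    linarith
  have hpq : p.HolderConjugate q := by
    rw [Real.holderConjugate_iff]
    constructor
    · rw [hp, lt_div_iff₀ hjR]
      have : (j:ℝ) < t := by exact_mod_cast hjt
      linarith
    · rw [hp, hq]
      field_simp
      ring
  have hsumF : ∑ i ∈ s, (F i ^ j) ^ p = ∑ i ∈ s, F i ^ t := by
    refine Finset.sum_congr rfl fun i hi => ?_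
    rw [← Real.rpow_natCast (F i) j, ← Real.rpow_mul (hF i hi),
      show (j:ℝ) * p = (t:ℕ) by rw [hp]; field_simp, Real.rpow_natCast]
  have hsumG : ∑ i ∈ s, (G i ^ (t - j)) ^ q = ∑ i ∈ s, G i ^ t := by
    refine Finset.sum_congr rfl fun i hi => ?_
    rw [← Real.rpow_natCast (G i) (t - j), ← Real.rpow_mul (hG i hi),
      show ((t - j : ℕ):ℝ) * q = (t:ℕ) by
        rw [hq, Nat.cast_sub hj]; field_simp, Real.rpow_natCast]
  have H := Real.inner_le_Lp_mul_Lq_of_nonneg (f := fun i => F i ^ j)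
    (g := fun i => G i ^ (t - j)) (s := s) hpq
    (fun i hi => pow_nonneg (hF i hi) j) (fun i hi => pow_nonneg (hG i hi) (t - j))
  rw [hsumF, hsumG] at H
  set P := ∑ i ∈ s, F i ^ t with hP
  set Q := ∑ i ∈ s, G i ^ t with hQ
  have hP0 : 0 ≤ P := Finset.sum_nonneg fun i hi => pow_nonneg (hF i hi) t
  have hQ0 : 0 ≤ Q := Finset.sum_nonneg fun i hi => pow_nonneg (hG i hi) t
  have hLHS0 : 0 ≤ ∑ i ∈ s, F i ^ j * G i ^ (t - j) :=
    Finset.sum_nonneg fun i hi => mul_nonneg (pow_nonneg (hF i hi) j) (pow_nonneg (hG i hi) (t-j))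
  calc (∑ i ∈ s, F i ^ j * G i ^ (t - j)) ^ t
      ≤ (P ^ (1/p) * Q ^ (1/q)) ^ t := pow_le_pow_left₀ hLHS0 H t
    _ = (P ^ (1/p)) ^ t * (Q ^ (1/q)) ^ t := mul_pow _ _ _
    _ = P ^ j * Q ^ (t - j) := by
        rw [← Real.rpow_natCast (P ^ (1/p)) t, ← Real.rpow_mul hP0,
          ← Real.rpow_natCast (Q ^ (1/q)) t, ← Real.rpow_mul hQ0,
          show 1/p * (t:ℕ) = ((j:ℕ):ℝ) by rw [hp]; field_simp,
          show 1/q * (t:ℕ) = ((t - j:ℕ):ℝ) by rw [hq, Nat.cast_sub hj]; field_simp,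
          Real.rpow_natCast, Real.rpow_natCast]

lemma hyper (t : ℕ) (ht : 0 < t) : ∀ (m : ℕ) (b : (Fin m → Bool) → ℝ),
    ∑ y : Fin m → Bool, (∑ z : Fin m → Bool, b z * chi z y) ^ (2*t)
      ≤ 2^m * (∑ z : Fin m → Bool, ((2*t - 1 : ℕ) : ℝ) ^ (hw z) * (b z)^2) ^ t := by
  intro m
  induction m with
  | zero =>
    intro b
    rw [Fintype.sum_unique, Fintype.sum_unique, Fintype.sum_unique]
    have hchi : ∀ z y : Fin 0 → Bool, chi z y = 1 := fun z y => by simp [chi]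
    have hhw : ∀ z : Fin 0 → Bool, hw z = 0 := fun z => by simp [hw]
    rw [hchi, hhw, mul_one]
    norm_num [pow_mul]
  | succ m ih =>
    intro b
    set τ : ℝ := ((2*t - 1 : ℕ) : ℝ) with hτ
    have hτ0 : 0 ≤ τ := Nat.cast_nonneg _
    set g : (Fin m → Bool) → ℝ := fun z => b (Fin.cons false z) with hg
    set h : (Fin m → Bool) → ℝ := fun z => b (Fin.cons true z) with hh
    set Gf : (Fin m → Bool) → ℝ := fun y => ∑ z, g z * chi z y with hGf
    set Hf : (Fin m → Bool) → ℝ := fun y => ∑ z, h z * chi z y with hHf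
    set BG : ℝ := ∑ z : Fin m → Bool, τ ^ (hw z) * (g z)^2 with hBG
    set BH : ℝ := ∑ z : Fin m → Bool, τ ^ (hw z) * (h z)^2 with hBH
    have hBG0 : 0 ≤ BG := Finset.sum_nonneg fun z _ => mul_nonneg (pow_nonneg hτ0 _) (sq_nonneg _)
    have hBH0 : 0 ≤ BH := Finset.sum_nonneg fun z _ => mul_nonneg (pow_nonneg hτ0 _) (sq_nonneg _)
    -- decomposition of the inner sum
    have hval : ∀ (yb : Bool) (y : Fin m → Bool),
        ∑ z : Fin (m+1) → Bool, b z * chi z (Fin.cons yb y)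
          = Gf y + (if yb = true then (-1:ℝ) else 1) * Hf y := by
      intro yb y
      rw [sum_cube_succ (fun z => b z * chi z (Fin.cons yb y))]
      have : ∀ z : Fin m → Bool,
          b (Fin.cons false z) * chi (Fin.cons false z) (Fin.cons yb y)
            + b (Fin.cons true z) * chi (Fin.cons true z) (Fin.cons yb y)
          = g z * chi z y + (if yb = true then (-1:ℝ) else 1) * (h z * chi z y) := by
        intro z
        rw [chi_cons, chi_cons, Fin.tail_cons, Fin.cons_zero]
        have h1 : (if false = true ∧ yb = true then (-1:ℝ) else 1) = 1 := by simp
        have h2 : (if true = true ∧ yb = true then (-1:ℝ) else 1)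
            = (if yb = true then (-1:ℝ) else 1) := by simp
        rw [h1, h2]; ring
      rw [Finset.sum_congr rfl (fun z _ => this z), Finset.sum_add_distrib, ← Finset.mul_sum]
    -- rewrite the LHS
    have hLHS : ∑ x : Fin (m+1) → Bool, (∑ z : Fin (m+1) → Bool, b z * chi z x) ^ (2*t)
        = ∑ y : Fin m → Bool, ((Hf y + Gf y)^(2*t) + (Hf y - Gf y)^(2*t)) := by
      rw [sum_cube_succ (fun x => (∑ z : Fin (m+1) → Bool, b z * chi z x) ^ (2*t))]
      refine Finset.sum_congr rfl fun y _ => ?_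
      rw [hval false y, hval true y]
      have e1 : Gf y + (if (false:Bool) = true then (-1:ℝ) else 1) * Hf y = Hf y + Gf y := by
        simp; ring
      have e2 : Gf y + (if (true:Bool) = true then (-1:ℝ) else 1) * Hf y = -(Hf y - Gf y) := by
        simp; ring
      rw [e1, e2, Even.neg_pow ⟨t, by ring⟩]
    rw [hLHS]
    -- expand with even_binom
    have hEB : ∀ y : Fin m → Bool, (Hf y + Gf y)^(2*t) + (Hf y - Gf y)^(2*t)
        = 2 * ∑ j ∈ Finset.range (t+1),
            (Nat.choose (2*t) (2*j) : ℝ) * ((Hf y^2)^j * (Gf y^2)^(t-j)) := by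
      intro y
      rw [even_binom (Hf y) (Gf y) t]
      congr 1
      refine Finset.sum_congr rfl fun j hj => ?_
      simp only [Finset.mem_range] at hj
      rw [← pow_mul, ← pow_mul, show 2*(t-j) = 2*t - 2*j by omega]
      ring
    rw [Finset.sum_congr rfl (fun y _ => hEB y), ← Finset.mul_sum, Finset.sum_comm]
    -- bound each j-term
    have hterm : ∀ j ∈ Finset.range (t+1),
        ∑ y : Fin m → Bool, (Nat.choose (2*t) (2*j) : ℝ) * ((Hf y^2)^j * (Gf y^2)^(t-j))
          ≤ (Nat.choose t j : ℝ) * τ^j * (2^m * (BH^j * BG^(t-j))) := by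
      intro j hj
      simp only [Finset.mem_range] at hj
      have hjt : j ≤ t := by omega
      rw [← Finset.mul_sum]
      have hmix : ∑ y : Fin m → Bool, (Hf y^2)^j * (Gf y^2)^(t-j)
          ≤ 2^m * (BH^j * BG^(t-j)) := by
        apply le_of_pow_le_pow_left₀ ht.ne' (by positivity)
        calc (∑ y : Fin m → Bool, (Hf y^2)^j * (Gf y^2)^(t-j))^t
            ≤ (∑ y : Fin m → Bool, (Hf y^2)^t)^j * (∑ y : Fin m → Bool, (Gf y^2)^t)^(t-j) :=
              holder_pow _ _ _ (fun i _ => sq_nonneg _) (fun i _ => sq_nonneg _) t j ht hjt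
          _ ≤ (2^m * BH^t)^j * (2^m * BG^t)^(t-j) := by
              have h1 : ∑ y : Fin m → Bool, (Hf y^2)^t ≤ 2^m * BH^t := by
                have := ih h
                calc ∑ y : Fin m → Bool, (Hf y^2)^t
                    = ∑ y : Fin m → Bool, (Hf y)^(2*t) := by
                      refine Finset.sum_congr rfl fun y _ => ?_; rw [← pow_mul]
                  _ ≤ 2^m * BH^t := this
              have h2 : ∑ y : Fin m → Bool, (Gf y^2)^t ≤ 2^m * BG^t := by
                have := ih g
                calc ∑ y : Fin m → Bool, (Gf y^2)^t
                    = ∑ y : Fin m → Bool, (Gf y)^(2*t) := by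
                      refine Finset.sum_congr rfl fun y _ => ?_; rw [← pow_mul]
                  _ ≤ 2^m * BG^t := this
              have hs1 : (0:ℝ) ≤ ∑ y : Fin m → Bool, (Hf y^2)^t :=
                Finset.sum_nonneg fun y _ => pow_nonneg (sq_nonneg _) t
              have hs2 : (0:ℝ) ≤ ∑ y : Fin m → Bool, (Gf y^2)^t :=
                Finset.sum_nonneg fun y _ => pow_nonneg (sq_nonneg _) t
              exact mul_le_mul (pow_le_pow_left₀ hs1 h1 j) (pow_le_pow_left₀ hs2 h2 (t-j))
                (pow_nonneg hs2 _) (pow_nonneg (by positivity) _)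
          _ = (2^m * (BH^j * BG^(t-j)))^t := by
              set d := t - j with hd
              rw [show t = j + d by omega]
              ring
      calc (Nat.choose (2*t) (2*j) : ℝ) * ∑ y : Fin m → Bool, (Hf y^2)^j * (Gf y^2)^(t-j)
          ≤ ((Nat.choose t j : ℝ) * τ^j) * (2^m * (BH^j * BG^(t-j))) := by
            apply mul_le_mul _ hmix (Finset.sum_nonneg fun y _ =>
              mul_nonneg (pow_nonneg (sq_nonneg _) _) (pow_nonneg (sq_nonneg _) _))
              (by positivity)
            rw [hτ, ← Nat.cast_pow, ← Nat.cast_mul]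
            exact_mod_cast choose_ineq t j hjt
        _ = (Nat.choose t j : ℝ) * τ^j * (2^m * (BH^j * BG^(t-j))) := by ring
    calc 2 * ∑ j ∈ Finset.range (t+1), ∑ y : Fin m → Bool,
            (Nat.choose (2*t) (2*j) : ℝ) * ((Hf y^2)^j * (Gf y^2)^(t-j))
        ≤ 2 * ∑ j ∈ Finset.range (t+1),
            (Nat.choose t j : ℝ) * τ^j * (2^m * (BH^j * BG^(t-j))) := by
          apply mul_le_mul_of_nonneg_left (Finset.sum_le_sum hterm) (by norm_num)
      _ = 2^(m+1) * ∑ j ∈ Finset.range (t+1), (τ*BH)^j * BG^(t-j) * (Nat.choose t j : ℝ) := by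
          rw [Finset.mul_sum, Finset.mul_sum]
          refine Finset.sum_congr rfl fun j _ => ?_
          rw [mul_pow, pow_succ]
          ring
      _ = 2^(m+1) * (τ*BH + BG)^t := by
          rw [add_pow]
      _ = 2^(m+1) * (∑ z : Fin (m+1) → Bool, τ ^ (hw z) * (b z)^2) ^ t := by
          congr 2
          rw [sum_cube_succ (fun z => τ ^ (hw z) * (b z)^2), Finset.sum_add_distrib]
          have e1 : ∀ z : Fin m → Bool, τ ^ (hw (Fin.cons false z)) * (b (Fin.cons false z))^2
              = τ ^ (hw z) * (g z)^2 := by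
            intro z; rw [hw_cons]; simp [hg]
          have e2 : ∀ z : Fin m → Bool, τ ^ (hw (Fin.cons true z)) * (b (Fin.cons true z))^2
              = τ * (τ ^ (hw z) * (h z)^2) := by
            intro z; rw [hw_cons]; simp [hh, pow_add, pow_succ]; ring
          rw [Finset.sum_congr rfl (fun z _ => e1 z), Finset.sum_congr rfl (fun z _ => e2 z),
            ← Finset.mul_sum, ← hBG, ← hBH]
          ring

lemma two_term_binom (Y g : ℕ) : ∀ s : ℕ, Y^(s+1) + (s+1)*g*Y^s ≤ (Y+g)^(s+1) := by
  intro s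
  induction s with
  | zero => simp
  | succ s ih =>
    calc Y^(s+2) + (s+2)*g*Y^(s+1)
        ≤ Y^(s+2) + (s+2)*g*Y^(s+1) + (s+1)*(g*g)*Y^s := Nat.le_add_right _ _
      _ = (Y+g)*(Y^(s+1) + (s+1)*g*Y^s) := by ring
      _ ≤ (Y+g)*(Y+g)^(s+1) := Nat.mul_le_mul_left _ ih
      _ = (Y+g)^(s+2) := by ring

lemma numeric (c k : ℕ) (hk1 : 1 ≤ k) (hkc : k ≤ c) :
    ∃ t : ℕ, 0 < t ∧ 2^c * ((2*t - 1)*k)^(k*t) ≤ (4*c)^(k*t) := by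
  by_cases hbig : c ≤ 2*k
  · refine ⟨1, one_pos, ?_⟩
    have e1 : (2*1-1)*k = k := by norm_num
    have e2 : k*1 = k := by norm_num
    rw [e1, e2]
    calc 2^c * k^k
        ≤ 2^(2*k) * c^k := Nat.mul_le_mul (Nat.pow_le_pow_right (by norm_num) hbig)
          (Nat.pow_le_pow_left hkc k)
      _ = 4^k * c^k := by rw [pow_mul]; norm_num
      _ = (4*c)^k := (mul_pow 4 c k).symm
  · push_neg at hbig
    refine ⟨c/k, Nat.div_pos hkc (by omega), ?_⟩
    set t := c / k with htdef
    clear_value t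
    have ht2 : 2 ≤ t := by
      rw [htdef]
      exact (Nat.le_div_iff_mul_le (by omega)).2 (by omega)
    set r := c % k with hrdef
    clear_value r
    have hrk : r < k := by rw [hrdef]; exact Nat.mod_lt _ (by omega)
    have hc_eq : k * t + r = c := by rw [htdef, hrdef]; exact Nat.div_add_mod c k
    set q := k * t with hq
    clear_value q
    have hqk : 2*k ≤ q := by
      rw [hq]
      calc 2*k = k*2 := by ring
        _ ≤ k*t := Nat.mul_le_mul_left _ ht2
    set Y := (2*t - 1)*k with hY
    clear_value Y
    have hY2 : Y + k = 2*q := by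
      have h1 : (2*t - 1) + 1 = 2*t := by omega
      calc Y + k = ((2*t-1)+1)*k := by rw [hY]; ring
        _ = (2*t)*k := by rw [h1]
        _ = 2*q := by rw [hq]; ring
    set gg := 2*r + k with hgg
    clear_value gg
    have hYX : Y + gg = 2*c := by omega
    rcases Nat.eq_zero_or_pos r with hr0 | hrpos
    · have hc_q : c = q := by omega
      calc 2^c * Y^q ≤ 2^c * (2*c)^q := Nat.mul_le_mul_left _ (Nat.pow_le_pow_left (by omega) q)
        _ = 2^q * (2*c)^q := by rw [hc_q]
        _ = (2*(2*c))^q := (mul_pow _ _ _).symm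
        _ = (4*c)^q := by ring_nf
    · set s := Y / gg + 1 with hs
      clear_value s
      have hgg0 : 0 < gg := by omega
      have hsg : Y + 1 ≤ gg * s := by
        have e := Nat.div_add_mod Y gg
        have h2 : Y % gg < gg := Nat.mod_lt _ hgg0
        have e2 : gg * s = gg*(Y/gg) + gg := by rw [hs, Nat.mul_succ]
        omega
      have hsr : r * s ≤ q := by
        have hs2 : s = (2*c)/gg := by
          rw [hs, ← Nat.add_div_right Y hgg0, show Y + gg = 2*c from hYX]
        have h3 : r * ((2*c)/gg) ≤ (r*(2*c))/gg := by
          rw [Nat.le_div_iff_mul_le hgg0]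
          calc r * ((2*c)/gg) * gg = r * (((2*c)/gg) * gg) := by ring
            _ ≤ r * (2*c) := Nat.mul_le_mul_left _ (Nat.div_mul_le_self _ _)
        have h5 : 2*(r*r) ≤ k*q := by
          have hrr : r*r ≤ k*k := Nat.mul_le_mul (le_of_lt hrk) (le_of_lt hrk)
          have hkq : k*(2*k) ≤ k*q := Nat.mul_le_mul_left _ hqk
          have he : k*(2*k) = 2*(k*k) := by ring
          omega
        have h4 : (r*(2*c))/gg ≤ q := by
          have hle : r*(2*c) ≤ gg * q := by
            have hc' : c = q + r := by omega
            calc r*(2*c) = 2*(r*q) + 2*(r*r) := by rw [hc']; ring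
              _ ≤ 2*(r*q) + k*q := by omega
              _ = gg*q := by rw [hgg]; ring
          calc (r*(2*c))/gg ≤ (gg*q)/gg := Nat.div_le_div_right hle
            _ = q := Nat.mul_div_cancel_left q hgg0
        calc r * s = r * ((2*c)/gg) := by rw [hs2]
          _ ≤ (r*(2*c))/gg := h3
          _ ≤ q := h4
      have hXs : 2 * Y^s ≤ (2*c)^s := by
        obtain ⟨s', hs'⟩ : ∃ s', s = s' + 1 := ⟨Y/gg, hs⟩
        rw [← hYX, hs']
        have hYle : Y ≤ (s'+1)*gg := by
          have e3 : gg * s = gg * (s'+1) := by rw [hs']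
          have h6 : gg*(s'+1) = (s'+1)*gg := Nat.mul_comm _ _
          omega
        calc 2 * Y^(s'+1) = Y^(s'+1) + Y*Y^(s') := by ring
          _ ≤ Y^(s'+1) + ((s'+1)*gg)*Y^(s') := Nat.add_le_add_left (Nat.mul_le_mul_right _ hYle) _
          _ ≤ (Y+gg)^(s'+1) := two_term_binom Y gg s'
      have main : 2^r * Y^q ≤ (2*c)^q := by
        have h2 : Y^(q - r*s) ≤ (2*c)^(q - r*s) := Nat.pow_le_pow_left (by omega) _
        have h3 : 2^r * Y^(r*s) ≤ (2*c)^(r*s) := by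
          calc 2^r * Y^(r*s) = 2^r * Y^(s*r) := by rw [Nat.mul_comm r s]
            _ = 2^r * (Y^s)^r := by rw [pow_mul]
            _ = (2*Y^s)^r := (mul_pow _ _ _).symm
            _ ≤ ((2*c)^s)^r := Nat.pow_le_pow_left hXs r
            _ = (2*c)^(s*r) := by rw [pow_mul]
            _ = (2*c)^(r*s) := by rw [Nat.mul_comm r s]
        calc 2^r * Y^q = (2^r * Y^(r*s)) * Y^(q - r*s) := by
              rw [mul_assoc, ← pow_add, Nat.add_sub_cancel' hsr]
          _ ≤ (2*c)^(r*s) * (2*c)^(q - r*s) := Nat.mul_le_mul h3 h2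
          _ = (2*c)^q := by rw [← pow_add, Nat.add_sub_cancel' hsr]
      calc 2^c * Y^q = 2^q * (2^r * Y^q) := by
            have hc' : c = q + r := by omega
            rw [hc', pow_add]; ring
        _ ≤ 2^q * (2*c)^q := Nat.mul_le_mul_left _ main
        _ = (2*(2*c))^q := (mul_pow _ _ _).symm
        _ = (4*c)^q := by ring_nf

/-- Lemma 4.20 (`lm:fouriercoeffs`): for `n = m + 1 ≥ 2` and `A ⊆ {0,1}^n` with
`|A| ≥ 2^{n-c}`, for every `1 ≤ k ≤ c`,
`∑_{v ∈ {0,1}^{n-1}, |v| = k} f̃(1·v)² ≤ (4c/k)^k`. -/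
theorem stmt2 (m c : ℕ) (hm : 1 ≤ m) (hc : 0 < c)
    (A : Finset (Fin (m + 1) → Bool))
    (hA : (2 : ℝ) ^ (m + 1) ≤ A.card * 2 ^ c)
    (k : ℕ) (hk1 : 1 ≤ k) (hk2 : k ≤ c) :
    ∑ v ∈ Finset.univ.filter (fun v : Fin m → Bool => hw v = k),
      ftilde A (Fin.cons true v) ^ 2 ≤ ((4 * c : ℝ) / k) ^ k := by
  have hA0 : (0:ℝ) < (A.card : ℝ) := by
    by_contra hcon
    push_neg at hcon
    have h0 : (A.card:ℝ) = 0 := le_antisymm hcon (Nat.cast_nonneg _)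
    rw [h0, zero_mul] at hA
    have := pow_pos (show (0:ℝ) < 2 by norm_num) (m+1)
    linarith
  have hcne : (A.card:ℝ) ≠ 0 := ne_of_gt hA0
  set b : (Fin m → Bool) → ℝ :=
    fun z => if hw z = k then ftilde A (Fin.cons true z) else 0 with hb
  set W : ℝ := ∑ z : Fin m → Bool, (b z)^2 with hW
  have hW0 : 0 ≤ W := Finset.sum_nonneg fun z _ => sq_nonneg _
  have hgoal : ∑ v ∈ Finset.univ.filter (fun v : Fin m → Bool => hw v = k),
      ftilde A (Fin.cons true v) ^ 2 = W := by
    rw [hW, Finset.sum_filter]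
    refine Finset.sum_congr rfl fun z _ => ?_
    simp only [hb]
    by_cases hz : hw z = k
    · rw [if_pos hz, if_pos hz]
    · rw [if_neg hz, if_neg hz]
      norm_num
  rw [hgoal]
  set Hf : (Fin m → Bool) → ℝ := fun y => ∑ z : Fin m → Bool, b z * chi z y with hHf
  -- key identity
  have key : ∑ x ∈ A, ((if x 0 = true then (-1:ℝ) else 1) * Hf (Fin.tail x))
      = (A.card : ℝ) * W := by
    have e1 : ∀ x ∈ A, (if x 0 = true then (-1:ℝ) else 1) * Hf (Fin.tail x)
        = ∑ z : Fin m → Bool, b z * chi (Fin.cons true z) x := by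
      intro x _
      rw [hHf, Finset.mul_sum]
      refine Finset.sum_congr rfl fun z _ => ?_
      rw [chi_cons]
      simp only [true_and]
      ring
    rw [Finset.sum_congr rfl e1, Finset.sum_comm]
    have e2 : ∀ z : Fin m → Bool,
        ∑ x ∈ A, b z * chi (Fin.cons true z) x = (A.card:ℝ) * (b z)^2 := by
      intro z
      rw [← Finset.mul_sum]
      have hsum : ∑ x ∈ A, chi (Fin.cons true z) x
          = (A.card:ℝ) * ftilde A (Fin.cons true z) := by
        rw [ftilde]
        field_simp
      rw [hsum]
      simp only [hb]
      by_cases hz : hw z = k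
      · rw [if_pos hz]; ring
      · rw [if_neg hz]; ring
    rw [Finset.sum_congr rfl (fun z _ => e2 z), ← Finset.mul_sum, hW]
  have habsle : (A.card:ℝ) * W ≤ ∑ x ∈ A, |Hf (Fin.tail x)| := by
    rw [← key]
    refine Finset.sum_le_sum fun x _ => ?_
    by_cases hx : x 0 = true
    · rw [if_pos hx, neg_one_mul]; exact neg_le_abs _
    · rw [if_neg hx, one_mul]; exact le_abs_self _
  obtain ⟨t, ht0, hnum⟩ := numeric c k hk1 hk2
  set τ : ℝ := ((2*t - 1 : ℕ) : ℝ) with hτ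
  have hτ0 : 0 ≤ τ := Nat.cast_nonneg _
  -- moment bound
  have habs : ∀ y : Fin m → Bool, |Hf y|^(2*t) = (Hf y)^(2*t) :=
    fun y => Even.pow_abs ⟨t, by ring⟩ _
  have hhyper : ∑ y : Fin m → Bool, (Hf y)^(2*t)
      ≤ 2^m * (∑ z : Fin m → Bool, τ ^ (hw z) * (b z)^2) ^ t := hyper t ht0 m b
  have hBval : ∑ z : Fin m → Bool, τ ^ (hw z) * (b z)^2 = τ^k * W := by
    rw [hW, Finset.mul_sum]
    refine Finset.sum_congr rfl fun z _ => ?_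
    by_cases hz : hw z = k
    · rw [hz]
    · have hbz : b z = 0 := by simp only [hb, if_neg hz]
      rw [hbz]
      ring
  rw [hBval] at hhyper
  have hfold : ∑ x : Fin (m+1) → Bool, |Hf (Fin.tail x)|^(2*t)
      = 2 * ∑ y : Fin m → Bool, (Hf y)^(2*t) := by
    rw [sum_cube_succ (fun x => |Hf (Fin.tail x)|^(2*t))]
    rw [Finset.mul_sum]
    refine Finset.sum_congr rfl fun y _ => ?_
    rw [Fin.tail_cons, Fin.tail_cons, habs]
    ring
  have hsub : ∑ x ∈ A, |Hf (Fin.tail x)|^(2*t)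
      ≤ ∑ x : Fin (m+1) → Bool, |Hf (Fin.tail x)|^(2*t) :=
    Finset.sum_le_sum_of_subset_of_nonneg (Finset.subset_univ A)
      (fun x _ _ => pow_nonneg (abs_nonneg _) _)
  have hpm : (∑ x ∈ A, |Hf (Fin.tail x)|)^(2*t)
      ≤ (A.card:ℝ)^(2*t-1) * ∑ x ∈ A, |Hf (Fin.tail x)|^(2*t) := by
    have H := holder_pow A (fun _ => (1:ℝ)) (fun x => |Hf (Fin.tail x)|)
      (fun i _ => zero_le_one) (fun i _ => abs_nonneg _) (2*t) (2*t-1) (by omega) (by omega)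
    have he : 2*t - (2*t-1) = 1 := by omega
    rw [he] at H
    simp only [one_pow, one_mul, pow_one, Finset.sum_const, nsmul_eq_mul, mul_one] at H
    exact H
  -- combine
  have hchain : ((A.card:ℝ) * W)^(2*t)
      ≤ (A.card:ℝ)^(2*t-1) * ((A.card:ℝ) * 2^c) * (τ^k * W)^t := by
    calc ((A.card:ℝ) * W)^(2*t)
        ≤ (∑ x ∈ A, |Hf (Fin.tail x)|)^(2*t) :=
          pow_le_pow_left₀ (mul_nonneg (le_of_lt hA0) hW0) habsle _
      _ ≤ (A.card:ℝ)^(2*t-1) * ∑ x ∈ A, |Hf (Fin.tail x)|^(2*t) := hpm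
      _ ≤ (A.card:ℝ)^(2*t-1) * (2 * ∑ y : Fin m → Bool, (Hf y)^(2*t)) := by
          apply mul_le_mul_of_nonneg_left _ (pow_nonneg (le_of_lt hA0) _)
          rw [← hfold]
          exact hsub
      _ ≤ (A.card:ℝ)^(2*t-1) * (2 * (2^m * (τ^k * W)^t)) := by
          apply mul_le_mul_of_nonneg_left _ (pow_nonneg (le_of_lt hA0) _)
          apply mul_le_mul_of_nonneg_left hhyper (by norm_num)
      _ = (A.card:ℝ)^(2*t-1) * (2^(m+1)) * (τ^k * W)^t := by ring
      _ ≤ (A.card:ℝ)^(2*t-1) * ((A.card:ℝ) * 2^c) * (τ^k * W)^t := by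
          apply mul_le_mul_of_nonneg_right _ (pow_nonneg (mul_nonneg (pow_nonneg hτ0 _) hW0) _)
          apply mul_le_mul_of_nonneg_left _ (pow_nonneg (le_of_lt hA0) _)
          exact_mod_cast hA
  have hWt : W^t * W^t ≤ (2^c * τ^(k*t)) * W^t := by
    have hcard : (0:ℝ) < (A.card:ℝ)^(2*t) := pow_pos hA0 _
    have h1 : ((A.card:ℝ) * W)^(2*t) = (A.card:ℝ)^(2*t) * (W^t * W^t) := by
      rw [mul_pow, show 2*t = t + t by ring, pow_add]
      ring
    have h2 : (A.card:ℝ)^(2*t-1) * ((A.card:ℝ) * 2^c) * (τ^k * W)^t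
        = (A.card:ℝ)^(2*t) * ((2^c * τ^(k*t)) * W^t) := by
      rw [mul_pow, ← pow_mul, show (A.card:ℝ)^(2*t-1) * ((A.card:ℝ) * 2^c)
        = (A.card:ℝ)^(2*t-1+1) * 2^c by rw [pow_succ]; ring,
        show 2*t-1+1 = 2*t by omega]
      ring
    rw [h1, h2] at hchain
    exact le_of_mul_le_mul_left hchain hcard
  -- numeric conclusion
  have hnumR : 2^c * τ^(k*t) ≤ (((4*c:ℝ))/k)^(k*t) := by
    have hkR : (0:ℝ) < (k:ℝ) := by exact_mod_cast hk1
    rw [div_pow, le_div_iff₀ (pow_pos hkR _)]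
    have : ((2:ℝ)^c * ((2*t-1:ℕ):ℝ)^(k*t)) * (k:ℝ)^(k*t)
        = ((2^c * ((2*t-1)*k)^(k*t) : ℕ) : ℝ) := by
      push_cast
      rw [mul_pow]
      ring
    rw [hτ, this]
    have h4 : (((4*c)^(k*t) : ℕ) : ℝ) = ((4*c:ℝ))^(k*t) := by push_cast; ring
    rw [← h4]
    exact_mod_cast hnum
  have hfinal : W^t ≤ (((4*c:ℝ))/k)^(k*t) := by
    rcases eq_or_lt_of_le hW0 with hWz | hWpos
    · rw [← hWz, zero_pow (by omega : t ≠ 0)]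
      positivity
    · have hWtpos : (0:ℝ) < W^t := pow_pos hWpos t
      have := le_of_mul_le_mul_right hWt hWtpos
      exact le_trans this hnumR
  have hkt : (((4*c:ℝ))/k)^(k*t) = ((((4*c:ℝ))/k)^k)^t := by
    rw [← pow_mul]
  rw [hkt] at hfinal
  refine le_of_pow_le_pow_left₀ (by omega : t ≠ 0) (by positivity) hfinal
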